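/- Let 0 < R ≤ ∞ and let φ and ψ be quasiconcave functions on [0,R). Then there exists a constant C > 0 such that C⁻¹ · (S_φ f(t) + T_ψ f(t)) ≤ S_φ(f**)(t) + T_ψ(f**)(t) ≤ C · (S_φ f(t) + T_ψ f(t)) for every nonnegative nonincreasing measurable function f on (0,R) and every t ∈ (0,R) if and only if both φ and ψ satisfy the B-condition. -/

import Mathlib

/-!
Since `f` is nonincreasing, `f ≤ f**`, which gives the lower estimate with any constant `C ≥ 1`.
For the upper estimate, the `B`-condition bounds averages: if `φ f ≤ A` on `(0, s)`, then
`∫₀ˢ f ≤ A ∫₀ˢ 1/φ ≤ C A s/φ(s)`, i.e. `φ(s) f**(s) ≤ C A`. This gives `S_φ f** ≤ C S_φ f`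
directly; for `T_ψ f**(t)` split `∫₀ˢ f` at `t`, and control the part over `(0, t)` through
`S_φ f(t)`, using that `ψ(s)/s` is nonincreasing.
Conversely, the upper estimate applied to `f = 1/φ` on `(0, t)`, cut off at `t`, is the
`B`-condition for `φ` below `t`. For `ψ`, take `f = 1/ψ(max(·, t))` cut off at `s`: both
`S_φ f(t)` and `T_ψ f(t)` are at most `1/ψ(t)`, so the estimate bounds `∫ₜˢ 1/ψ` by
`2C s/ψ(s)` uniformly in `t`; let `t → 0`.
-/

open MeasureTheory Set ENNReal Filter

noncomputable section

/-- The open interval `(0, R)` inside `ℝ`, where `R ∈ (0, ∞]` is an extended real. -/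
def DomIoo (R : ℝ≥0∞) : Set ℝ := {t : ℝ | 0 < t ∧ ENNReal.ofReal t < R}

/-- The part of `(0, R)` lying strictly above `t`. -/
def DomAbove (R : ℝ≥0∞) (t : ℝ) : Set ℝ := {s : ℝ | t < s ∧ ENNReal.ofReal s < R}

/-- `φ : [0, R) → [0, ∞)` is quasiconcave: it vanishes exactly at `0`, is nondecreasing,
and `t ↦ φ(t)/t` is nonincreasing on `(0, R)`.  (Values on `(0, R)` are finite.) -/
def QuasiConcaveOn (R : ℝ≥0∞) (φ : ℝ → ℝ≥0∞) : Prop :=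
  φ 0 = 0 ∧
  (∀ t ∈ DomIoo R, 0 < φ t ∧ φ t < ⊤) ∧
  (∀ s t : ℝ, 0 ≤ s → s ≤ t → t ∈ DomIoo R → φ s ≤ φ t) ∧
  (∀ s t : ℝ, s ∈ DomIoo R → s ≤ t → t ∈ DomIoo R →
    φ t / ENNReal.ofReal t ≤ φ s / ENNReal.ofReal s)

/-- `f` is a nonnegative nonincreasing measurable function on `(0, R)`
(nonnegativity is built into the codomain `[0, ∞]`). -/
def NonincOn (R : ℝ≥0∞) (f : ℝ → ℝ≥0∞) : Prop :=
  Measurable f ∧ ∀ s t : ℝ, s ∈ DomIoo R → s ≤ t → t ∈ DomIoo R → f t ≤ f s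

/-- The level function `f**(t) = (1/t) ∫₀ᵗ f(s) ds`. -/
def dstar (f : ℝ → ℝ≥0∞) (t : ℝ) : ℝ≥0∞ :=
  (∫⁻ s in Ioo (0 : ℝ) t, f s) / ENNReal.ofReal t

/-- The supremum operator `S_φ f(t) = (1/φ(t)) ⋅ sup_{0<s<t} φ(s) f(s)`. -/
def Ssup (φ f : ℝ → ℝ≥0∞) (t : ℝ) : ℝ≥0∞ :=
  (⨆ s ∈ Ioo (0 : ℝ) t, φ s * f s) / φ t

/-- The supremum operator `T_ψ f(t) = (1/ψ(t)) ⋅ sup_{t<s<R} ψ(s) f(s)`. -/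
def Tsup (R : ℝ≥0∞) (ψ f : ℝ → ℝ≥0∞) (t : ℝ) : ℝ≥0∞ :=
  (⨆ s ∈ DomAbove R t, ψ s * f s) / ψ t

/-- The `B`-condition: `∫₀ᵗ ds/φ(s) ≤ C ⋅ t/φ(t)` on `(0, R)` for some constant `C > 0`. -/
def BCond (R : ℝ≥0∞) (φ : ℝ → ℝ≥0∞) : Prop :=
  ∃ C : ℝ, 0 < C ∧ ∀ t ∈ DomIoo R,
    (∫⁻ s in Ioo (0 : ℝ) t, 1 / φ s) ≤ ENNReal.ofReal C * (ENNReal.ofReal t / φ t)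

/-- A weight on `(0, R)`: positive, measurable and locally integrable
(with finite integral near the origin). -/
def IsWeight (R : ℝ≥0∞) (w : ℝ → ℝ≥0∞) : Prop :=
  Measurable w ∧ (∀ t ∈ DomIoo R, 0 < w t ∧ w t < ⊤) ∧
  ∀ t ∈ DomIoo R, (∫⁻ s in Ioo (0 : ℝ) t, w s) < ⊤

/-- Nontriviality of a weight `w` for the exponent `p`:
`∫₁^∞ s^{-p} w(s) ds < ∞` when `R = ∞`, and `∫₀ᴿ s^{-p} w(s) ds = ∞` when `R < ∞`. -/
def Nontriv (R : ℝ≥0∞) (p : ℝ) (w : ℝ → ℝ≥0∞) : Prop :=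
  (R = ⊤ → (∫⁻ s in Ioi (1 : ℝ), ENNReal.ofReal s ^ (-p) * w s) < ⊤) ∧
  (R ≠ ⊤ → (∫⁻ s in DomIoo R, ENNReal.ofReal s ^ (-p) * w s) = ⊤)

variable {R : ℝ≥0∞}

lemma mem_domIoo_of_le {s t : ℝ} (ht : t ∈ DomIoo R) (hs : 0 < s) (hst : s ≤ t) :
    s ∈ DomIoo R :=
  ⟨hs, (ENNReal.ofReal_le_ofReal hst).trans_lt ht.2⟩

lemma mem_domIoo_of_mem_domAbove {s t : ℝ} (ht : t ∈ DomIoo R) (hs : s ∈ DomAbove R t) :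
    s ∈ DomIoo R :=
  ⟨ht.1.trans hs.1, hs.2⟩

lemma exists_mem_domAbove {t : ℝ} (ht : t ∈ DomIoo R) : ∃ s, s ∈ DomAbove R t := by
  obtain ⟨r, -, htr, hr⟩ := ENNReal.lt_iff_exists_real_btwn.1 ht.2
  exact ⟨r, (ENNReal.ofReal_lt_ofReal_iff'.1 htr).1, hr⟩

namespace QuasiConcaveOn

variable {φ : ℝ → ℝ≥0∞} (hφ : QuasiConcaveOn R φ) {s t : ℝ}
include hφ

lemma ne_zero (ht : t ∈ DomIoo R) : φ t ≠ 0 := (hφ.2.1 t ht).1.ne'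

lemma ne_top (ht : t ∈ DomIoo R) : φ t ≠ ⊤ := (hφ.2.1 t ht).2.ne

lemma monotoneOn_Icc (ht : t ∈ DomIoo R) : MonotoneOn φ (Icc 0 t) := by
  intro a ha b hb hab
  rcases hb.1.eq_or_lt with rfl | hb0
  · rw [le_antisymm hab ha.1]
  · exact hφ.2.2.1 a b ha.1 hab (mem_domIoo_of_le ht hb0 hb.2)

lemma div_le_div_of_le (hs : s ∈ DomIoo R) (hst : s ≤ t) (ht : t ∈ DomIoo R) :
    φ t / ENNReal.ofReal t ≤ φ s / ENNReal.ofReal s :=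
  hφ.2.2.2 s t hs hst ht

end QuasiConcaveOn

section SupOperators

variable {φ g : ℝ → ℝ≥0∞} {s t : ℝ} {A : ℝ≥0∞}

lemma mul_le_mul_Ssup (h0 : φ t ≠ 0) (hT : φ t ≠ ⊤) (hs : s ∈ Ioo 0 t) :
    φ s * g s ≤ φ t * Ssup φ g t := by
  rw [Ssup, ENNReal.mul_div_cancel h0 hT]
  exact le_iSup₂ (f := fun s _ => φ s * g s) s hs

lemma mul_le_mul_Tsup (h0 : φ t ≠ 0) (hT : φ t ≠ ⊤) (hs : s ∈ DomAbove R t) :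
    φ s * g s ≤ φ t * Tsup R φ g t := by
  rw [Tsup, ENNReal.mul_div_cancel h0 hT]
  exact le_iSup₂ (f := fun s _ => φ s * g s) s hs

lemma Ssup_le_div (h : ∀ s ∈ Ioo 0 t, φ s * g s ≤ A) : Ssup φ g t ≤ A / φ t :=
  ENNReal.div_le_div_right (iSup₂_le h) _

lemma Tsup_le_div (h : ∀ s ∈ DomAbove R t, φ s * g s ≤ A) : Tsup R φ g t ≤ A / φ t :=
  ENNReal.div_le_div_right (iSup₂_le h) _

end SupOperators

lemma ENNReal.mul_div_le_iff_le_mul_div {w y I c : ℝ≥0∞} (hw0 : w ≠ 0) (hwT : w ≠ ⊤)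
    (hy0 : y ≠ 0) (hyT : y ≠ ⊤) : w * (I / y) ≤ c ↔ I ≤ c * (y / w) := by
  rw [mul_comm, ← ENNReal.le_div_iff_mul_le (Or.inl hw0) (Or.inl hwT),
    ENNReal.div_le_iff hy0 hyT, div_eq_mul_inv, div_eq_mul_inv, mul_right_comm, mul_assoc]

section Integrals

variable {f : ℝ → ℝ≥0∞}

lemma lintegral_Ioo_eq_add {a b c : ℝ} (hab : a ≤ b) (hbc : b < c) :
    ∫⁻ u in Ioo a c, f u = (∫⁻ u in Ioo a b, f u) + ∫⁻ u in Ioo b c, f u := by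
  rw [← Ioc_union_Ioo_eq_Ioo hab hbc,
    lintegral_union measurableSet_Ioo (Ioc_disjoint_Ioi_same.mono_right Ioo_subset_Ioi_self),
    setLIntegral_congr Ioo_ae_eq_Ioc.symm]

lemma setLIntegral_Ioo_zero_le {s : ℝ} {c : ℝ≥0∞}
    (H : ∀ t ∈ Ioo 0 s, ∫⁻ u in Ioo t s, f u ≤ c) : ∫⁻ u in Ioo 0 s, f u ≤ c := by
  have hU : Ioo 0 s = ⋃ n : ℕ, Ioo (1 / (n + 1 : ℝ)) s := by
    ext u
    simp only [mem_Ioo, mem_iUnion]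
    constructor
    · rintro ⟨hu, hus⟩
      obtain ⟨n, hn⟩ := exists_nat_one_div_lt hu
      exact ⟨n, hn, hus⟩
    · rintro ⟨n, hn, hus⟩
      exact ⟨Nat.one_div_pos_of_nat.trans hn, hus⟩
  rw [hU, setLIntegral_iUnion_of_directed _ (Monotone.directed_le fun m n hmn =>
    Ioo_subset_Ioo_left (Nat.one_div_le_one_div hmn))]
  refine iSup_le fun n => ?_
  rcases lt_or_ge (1 / (n + 1 : ℝ)) s with hn | hn
  · exact H _ ⟨Nat.one_div_pos_of_nat, hn⟩
  · rw [Ioo_eq_empty_of_le hn, Measure.restrict_empty, lintegral_zero_measure]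
    exact zero_le

lemma setLIntegral_le_mul_setLIntegral_inv {w : ℝ → ℝ≥0∞} {E : Set ℝ} (hE : MeasurableSet E)
    {A : ℝ≥0∞} (hA : A ≠ ⊤) (hw : ∀ u ∈ E, w u ≠ 0) (h : ∀ u ∈ E, w u * f u ≤ A) :
    ∫⁻ u in E, f u ≤ A * ∫⁻ u in E, 1 / w u := by
  rw [← lintegral_const_mul' A _ hA]
  refine setLIntegral_mono' hE fun u hu => ?_
  rw [mul_one_div, ENNReal.le_div_iff_mul_le (Or.inl (hw u hu)) (Or.inr hA), mul_comm]
  exact h u hu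

lemma le_dstar (hf : NonincOn R f) {s : ℝ} (hs : s ∈ DomIoo R) : f s ≤ dstar f s := by
  have hs0 : ENNReal.ofReal s ≠ 0 := (ENNReal.ofReal_pos.2 hs.1).ne'
  have hconst : f s * ENNReal.ofReal s = ∫⁻ _ in Ioo 0 s, f s := by
    rw [setLIntegral_const, Real.volume_Ioo, sub_zero]
  rw [dstar, ENNReal.le_div_iff_mul_le (Or.inl hs0) (Or.inl ENNReal.ofReal_ne_top), hconst]
  exact setLIntegral_mono' measurableSet_Ioo fun u hu =>
    hf.2 u s (mem_domIoo_of_le hs hu.1 hu.2.le) hu.2.le hs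

end Integrals

def BCondWith (R : ℝ≥0∞) (φ : ℝ → ℝ≥0∞) (K : ℝ≥0∞) : Prop :=
  ∀ t ∈ DomIoo R, ∫⁻ s in Ioo 0 t, 1 / φ s ≤ K * (ENNReal.ofReal t / φ t)

section Sufficiency

variable {φ ψ f : ℝ → ℝ≥0∞} {K : ℝ≥0∞} {s t : ℝ}

lemma Ssup_add_Tsup_le_dstar (hf : NonincOn R f) (ht : t ∈ DomIoo R) :
    Ssup φ f t + Tsup R ψ f t ≤ Ssup φ (dstar f) t + Tsup R ψ (dstar f) t := by
  gcongr ?_ + ?_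
  · refine ENNReal.div_le_div_right (iSup₂_mono fun s hs => ?_) _
    gcongr
    exact le_dstar hf (mem_domIoo_of_le ht hs.1 hs.2.le)
  · refine ENNReal.div_le_div_right (iSup₂_mono fun s hs => ?_) _
    gcongr
    exact le_dstar hf (mem_domIoo_of_mem_domAbove ht hs)

lemma mul_setLIntegral_div_le_of_bCondWith (hφ : QuasiConcaveOn R φ) (hK : K ≠ 0)
    (hB : BCondWith R φ K) (hs : s ∈ DomIoo R)
    {E : Set ℝ} (hE : MeasurableSet E) (hEs : E ⊆ Ioo 0 s) {A : ℝ≥0∞}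
    (h : ∀ u ∈ E, φ u * f u ≤ A) :
    φ s * ((∫⁻ u in E, f u) / ENNReal.ofReal s) ≤ K * A := by
  rcases eq_or_ne A ⊤ with rfl | hA
  · rw [ENNReal.mul_top hK]
    exact le_top
  rw [ENNReal.mul_div_le_iff_le_mul_div (hφ.ne_zero hs) (hφ.ne_top hs)
    (ENNReal.ofReal_pos.2 hs.1).ne' ENNReal.ofReal_ne_top]
  calc ∫⁻ u in E, f u
      ≤ A * ∫⁻ u in E, 1 / φ u := setLIntegral_le_mul_setLIntegral_inv hE hA
        (fun u hu => hφ.ne_zero (mem_domIoo_of_le hs (hEs hu).1 (hEs hu).2.le)) h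
    _ ≤ A * ∫⁻ u in Ioo 0 s, 1 / φ u := by gcongr
    _ ≤ A * (K * (ENNReal.ofReal s / φ s)) := by gcongr; exact hB s hs
    _ = K * A * (ENNReal.ofReal s / φ s) := by ring

lemma Ssup_dstar_le (hφ : QuasiConcaveOn R φ) (hK : K ≠ 0)
    (hB : BCondWith R φ K) (ht : t ∈ DomIoo R) : Ssup φ (dstar f) t ≤ K * Ssup φ f t := by
  have hs : ∀ s ∈ Ioo 0 t, φ s * dstar f s ≤ K * (φ t * Ssup φ f t) := fun s hs =>
    have hs' := mem_domIoo_of_le ht hs.1 hs.2.le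
    mul_setLIntegral_div_le_of_bCondWith hφ hK hB hs' measurableSet_Ioo subset_rfl
      fun u hu => mul_le_mul_Ssup (hφ.ne_zero ht) (hφ.ne_top ht) ⟨hu.1, hu.2.trans hs.2⟩
  refine (Ssup_le_div hs).trans_eq ?_
  rw [mul_left_comm, mul_comm, ENNReal.mul_div_cancel_right (hφ.ne_zero ht) (hφ.ne_top ht)]

lemma Tsup_dstar_le (hφ : QuasiConcaveOn R φ) (hψ : QuasiConcaveOn R ψ) (hK : K ≠ 0)
    (hBφ : BCondWith R φ K) (hBψ : BCondWith R ψ K)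
    (ht : t ∈ DomIoo R) : Tsup R ψ (dstar f) t ≤ K * (Ssup φ f t + Tsup R ψ f t) := by
  have hdt : dstar f t ≤ K * Ssup φ f t := by
    have h := mul_setLIntegral_div_le_of_bCondWith hφ hK hBφ ht measurableSet_Ioo subset_rfl
      fun u hu => mul_le_mul_Ssup (g := f) (hφ.ne_zero ht) (hφ.ne_top ht) hu
    rwa [mul_left_comm, ENNReal.mul_le_mul_iff_right (hφ.ne_zero ht) (hφ.ne_top ht)] at h
  have hs : ∀ s ∈ DomAbove R t,
      ψ s * dstar f s ≤ ψ t * (K * (Ssup φ f t + Tsup R ψ f t)) := by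
    intro s hs
    have hs' := mem_domIoo_of_mem_domAbove ht hs
    calc ψ s * dstar f s
        = ψ s / ENNReal.ofReal s * (∫⁻ u in Ioo 0 t, f u)
            + ψ s * ((∫⁻ u in Ioo t s, f u) / ENNReal.ofReal s) := by
          rw [dstar, lintegral_Ioo_eq_add ht.1.le hs.1, ENNReal.add_div, mul_add, ← mul_div_assoc,
            ENNReal.mul_div_right_comm]
      _ ≤ ψ t / ENNReal.ofReal t * (∫⁻ u in Ioo 0 t, f u) + K * (ψ t * Tsup R ψ f t) := by
          gcongr ?_ * _ + ?_
          · exact hψ.div_le_div_of_le ht hs.1.le hs'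
          · exact mul_setLIntegral_div_le_of_bCondWith hψ hK hBψ hs' measurableSet_Ioo
              (Ioo_subset_Ioo_left ht.1.le) fun u hu => mul_le_mul_Tsup (hψ.ne_zero ht)
                (hψ.ne_top ht) ⟨hu.1, (ENNReal.ofReal_le_ofReal hu.2.le).trans_lt hs.2⟩
      _ = ψ t * dstar f t + K * (ψ t * Tsup R ψ f t) := by
          rw [dstar, ← ENNReal.mul_div_right_comm, mul_div_assoc]
      _ ≤ ψ t * (K * Ssup φ f t) + K * (ψ t * Tsup R ψ f t) := by gcongr
      _ = ψ t * (K * (Ssup φ f t + Tsup R ψ f t)) := by ring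
  refine (Tsup_le_div hs).trans_eq ?_
  rw [mul_comm, ENNReal.mul_div_cancel_right (hψ.ne_zero ht) (hψ.ne_top ht)]

lemma Ssup_dstar_add_Tsup_dstar_le (hφ : QuasiConcaveOn R φ) (hψ : QuasiConcaveOn R ψ)
    (hK : K ≠ 0) (hBφ : BCondWith R φ K) (hBψ : BCondWith R ψ K) (ht : t ∈ DomIoo R) :
    Ssup φ (dstar f) t + Tsup R ψ (dstar f) t ≤ 2 * K * (Ssup φ f t + Tsup R ψ f t) :=
  calc Ssup φ (dstar f) t + Tsup R ψ (dstar f) t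
      ≤ K * (Ssup φ f t + Tsup R ψ f t) + K * (Ssup φ f t + Tsup R ψ f t) := by
        gcongr ?_ + ?_
        · exact (Ssup_dstar_le hφ hK hBφ ht).trans (by gcongr; exact le_self_add)
        · exact Tsup_dstar_le hφ hψ hK hBφ hBψ ht
    _ = 2 * K * (Ssup φ f t + Tsup R ψ f t) := by ring

lemma exists_common_bCond_const (hφ : BCond R φ) (hψ : BCond R ψ) :
    ∃ C : ℝ, 0 < C ∧ BCondWith R φ (ENNReal.ofReal C) ∧ BCondWith R ψ (ENNReal.ofReal C) := by
  obtain ⟨Cφ, hCφ, hBφ⟩ := hφ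
  obtain ⟨Cψ, -, hBψ⟩ := hψ
  refine ⟨max Cφ Cψ, lt_max_of_lt_left hCφ, fun s hs => (hBφ s hs).trans ?_,
    fun s hs => (hBψ s hs).trans ?_⟩
  all_goals gcongr
  exacts [le_max_left _ _, le_max_right _ _]

end Sufficiency

section Necessity

variable {φ ψ w : ℝ → ℝ≥0∞} {a b s t u : ℝ}

def cutoffInv (w : ℝ → ℝ≥0∞) (a b : ℝ) (u : ℝ) : ℝ≥0∞ :=
  if u < b then (w (max a u))⁻¹ else 0

lemma cutoffInv_of_le_of_lt (hu : u ≤ a) (hub : u < b) : cutoffInv w a b u = (w a)⁻¹ := by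
  rw [cutoffInv, if_pos hub, max_eq_left hu]

lemma cutoffInv_of_ge_of_lt (hu : a ≤ u) (hub : u < b) : cutoffInv w a b u = (w u)⁻¹ := by
  rw [cutoffInv, if_pos hub, max_eq_right hu]

lemma cutoffInv_of_ge (hbu : b ≤ u) : cutoffInv w a b u = 0 := by
  rw [cutoffInv, if_neg hbu.not_gt]

lemma QuasiConcaveOn.nonincOn_cutoffInv (hw : QuasiConcaveOn R w) (ha : 0 ≤ a) (hab : a ≤ b)
    (hb : b ∈ DomIoo R) : NonincOn R (cutoffInv w a b) := by
  have hanti : Antitone (cutoffInv w a b) := by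
    intro u v huv
    by_cases hv : v < b
    · rw [cutoffInv, cutoffInv, if_pos hv, if_pos (huv.trans_lt hv), ENNReal.inv_le_inv]
      exact hw.monotoneOn_Icc hb ⟨ha.trans (le_max_left _ _), max_le hab (huv.trans hv.le)⟩
        ⟨ha.trans (le_max_left _ _), max_le hab hv.le⟩ (max_le_max le_rfl huv)
    · rw [cutoffInv_of_ge (not_lt.1 hv)]
      exact zero_le
  exact ⟨hanti.measurable, fun s t _ hst _ => hanti hst⟩

lemma Ssup_cutoffInv_zero_le (hφ : QuasiConcaveOn R φ) (ht : t ∈ DomIoo R) :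
    Ssup φ (cutoffInv φ 0 t) t ≤ (φ t)⁻¹ := by
  refine (Ssup_le_div fun u hu => ?_).trans_eq (one_div _)
  have hu' := mem_domIoo_of_le ht hu.1 hu.2.le
  rw [cutoffInv_of_ge_of_lt hu.1.le hu.2, ENNReal.mul_inv_cancel (hφ.ne_zero hu') (hφ.ne_top hu')]

lemma Tsup_cutoffInv_eq_zero : Tsup R ψ (cutoffInv w a t) t = 0 := by
  refine le_antisymm ((Tsup_le_div fun u hu => ?_).trans_eq ENNReal.zero_div) zero_le
  rw [cutoffInv_of_ge hu.1.le, mul_zero]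

lemma Ssup_cutoffInv_le (hφ : QuasiConcaveOn R φ) (ht : t ∈ DomIoo R) (hts : t ≤ s) :
    Ssup φ (cutoffInv ψ t s) t ≤ (ψ t)⁻¹ := by
  refine (Ssup_le_div (A := φ t * (ψ t)⁻¹) fun u hu => ?_).trans_eq ?_
  · rw [cutoffInv_of_le_of_lt hu.2.le (hu.2.trans_le hts)]
    gcongr
    exact hφ.monotoneOn_Icc ht ⟨hu.1.le, hu.2.le⟩ ⟨ht.1.le, le_rfl⟩ hu.2.le
  · rw [mul_comm, ENNReal.mul_div_cancel_right (hφ.ne_zero ht) (hφ.ne_top ht)]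

lemma Tsup_cutoffInv_le (hψ : QuasiConcaveOn R ψ) (ht : t ∈ DomIoo R) :
    Tsup R ψ (cutoffInv ψ t s) t ≤ (ψ t)⁻¹ := by
  refine (Tsup_le_div fun u hu => ?_).trans_eq (one_div _)
  rcases lt_or_ge u s with hus | hsu
  · have hu' := mem_domIoo_of_mem_domAbove ht hu
    rw [cutoffInv_of_ge_of_lt hu.1.le hus, ENNReal.mul_inv_cancel (hψ.ne_zero hu') (hψ.ne_top hu')]
  · rw [cutoffInv_of_ge hsu, mul_zero]
    exact zero_le

lemma bCond_of_Ssup_dstar_le (hφ : QuasiConcaveOn R φ) {C : ℝ} (hC : 0 < C)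
    (H : ∀ f, NonincOn R f → ∀ t ∈ DomIoo R,
      Ssup φ (dstar f) t ≤ ENNReal.ofReal C * (Ssup φ f t + Tsup R ψ f t)) :
    BCond R φ := by
  refine ⟨C, hC, fun s hs => ?_⟩
  obtain ⟨t, hst, ht⟩ := exists_mem_domAbove hs
  have ht' := mem_domIoo_of_mem_domAbove hs ⟨hst, ht⟩
  have hbound : φ s * dstar (cutoffInv φ 0 t) s ≤ ENNReal.ofReal C :=
    calc φ s * dstar (cutoffInv φ 0 t) s ≤ φ t * Ssup φ (dstar (cutoffInv φ 0 t)) t :=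
          mul_le_mul_Ssup (hφ.ne_zero ht') (hφ.ne_top ht') ⟨hs.1, hst⟩
      _ ≤ φ t * (ENNReal.ofReal C * (φ t)⁻¹) := by
          gcongr
          refine (H _ (hφ.nonincOn_cutoffInv le_rfl ht'.1.le ht') t ht').trans ?_
          rw [Tsup_cutoffInv_eq_zero, add_zero]
          gcongr
          exact Ssup_cutoffInv_zero_le hφ ht'
      _ = ENNReal.ofReal C := by
          rw [mul_left_comm, ENNReal.mul_inv_cancel (hφ.ne_zero ht') (hφ.ne_top ht'), mul_one]
  calc ∫⁻ u in Ioo 0 s, 1 / φ u = ∫⁻ u in Ioo 0 s, cutoffInv φ 0 t u :=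
        setLIntegral_congr_fun measurableSet_Ioo fun u hu => by
          rw [cutoffInv_of_ge_of_lt hu.1.le (hu.2.trans hst), one_div]
    _ ≤ ENNReal.ofReal C * (ENNReal.ofReal s / φ s) :=
        (ENNReal.mul_div_le_iff_le_mul_div (hφ.ne_zero hs) (hφ.ne_top hs)
          (ENNReal.ofReal_pos.2 hs.1).ne' ENNReal.ofReal_ne_top).1 hbound

lemma bCond_of_Tsup_dstar_le (hφ : QuasiConcaveOn R φ) (hψ : QuasiConcaveOn R ψ) {C : ℝ}
    (hC : 0 < C)
    (H : ∀ f, NonincOn R f → ∀ t ∈ DomIoo R,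
      Tsup R ψ (dstar f) t ≤ ENNReal.ofReal C * (Ssup φ f t + Tsup R ψ f t)) :
    BCond R ψ := by
  refine ⟨2 * C, by positivity, fun s hs => setLIntegral_Ioo_zero_le fun t ht => ?_⟩
  have ht' := mem_domIoo_of_le hs ht.1 ht.2.le
  have hbound : ψ s * dstar (cutoffInv ψ t s) s ≤ ENNReal.ofReal (2 * C) :=
    calc ψ s * dstar (cutoffInv ψ t s) s ≤ ψ t * Tsup R ψ (dstar (cutoffInv ψ t s)) t :=
          mul_le_mul_Tsup (hψ.ne_zero ht') (hψ.ne_top ht') ⟨ht.2, hs.2⟩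
      _ ≤ ψ t * (ENNReal.ofReal C * (2 * (ψ t)⁻¹)) := by
          gcongr
          refine (H _ (hψ.nonincOn_cutoffInv ht.1.le ht.2.le hs) t ht').trans ?_
          rw [two_mul]
          gcongr
          exacts [Ssup_cutoffInv_le hφ ht' ht.2.le, Tsup_cutoffInv_le hψ ht']
      _ = ENNReal.ofReal (2 * C) := by
          rw [show ψ t * (ENNReal.ofReal C * (2 * (ψ t)⁻¹))
              = 2 * ENNReal.ofReal C * (ψ t * (ψ t)⁻¹) by ring,
            ENNReal.mul_inv_cancel (hψ.ne_zero ht') (hψ.ne_top ht'), mul_one,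
            ENNReal.ofReal_mul zero_le_two, ENNReal.ofReal_ofNat]
  calc ∫⁻ u in Ioo t s, 1 / ψ u = ∫⁻ u in Ioo t s, cutoffInv ψ t s u :=
        setLIntegral_congr_fun measurableSet_Ioo fun u hu => by
          rw [cutoffInv_of_ge_of_lt hu.1.le hu.2, one_div]
    _ ≤ ∫⁻ u in Ioo 0 s, cutoffInv ψ t s u := lintegral_mono_set (Ioo_subset_Ioo_left ht.1.le)
    _ ≤ ENNReal.ofReal (2 * C) * (ENNReal.ofReal s / ψ s) :=
        (ENNReal.mul_div_le_iff_le_mul_div (hψ.ne_zero hs) (hψ.ne_top hs)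
          (ENNReal.ofReal_pos.2 hs.1).ne' ENNReal.ofReal_ne_top).1 hbound

end Necessity

theorem statement11_general (R : ℝ≥0∞) (φ ψ : ℝ → ℝ≥0∞)
    (hφ : QuasiConcaveOn R φ) (hψ : QuasiConcaveOn R ψ) :
    (∃ C : ℝ, 0 < C ∧ ∀ f : ℝ → ℝ≥0∞, NonincOn R f → ∀ t ∈ DomIoo R,
        (ENNReal.ofReal C)⁻¹ * (Ssup φ f t + Tsup R ψ f t) ≤
            Ssup φ (dstar f) t + Tsup R ψ (dstar f) t ∧
        Ssup φ (dstar f) t + Tsup R ψ (dstar f) t ≤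
            ENNReal.ofReal C * (Ssup φ f t + Tsup R ψ f t)) ↔
      (BCond R φ ∧ BCond R ψ) := by
  constructor
  · rintro ⟨C, hC, H⟩
    exact ⟨bCond_of_Ssup_dstar_le hφ hC fun f hf t ht => le_self_add.trans (H f hf t ht).2,
      bCond_of_Tsup_dstar_le hφ hψ hC fun f hf t ht => le_add_self.trans (H f hf t ht).2⟩
  · rintro ⟨hBφ, hBψ⟩
    obtain ⟨C, hC, hBφ, hBψ⟩ := exists_common_bCond_const hBφ hBψ
    refine ⟨2 * C + 1, by positivity, fun f hf t ht => ⟨?_, ?_⟩⟩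
    · refine le_trans ?_ (Ssup_add_Tsup_le_dstar hf ht)
      exact mul_le_of_le_one_left zero_le
        (ENNReal.inv_le_one.2 (ENNReal.one_le_ofReal.2 (by linarith)))
    · refine (Ssup_dstar_add_Tsup_dstar_le hφ hψ (ENNReal.ofReal_pos.2 hC).ne' hBφ hBψ ht).trans ?_
      rw [← ENNReal.ofReal_ofNat 2, ← ENNReal.ofReal_mul zero_le_two]
      gcongr
      linarith

/-- `S_φ(f**) + T_ψ(f**) ≃ S_φ f + T_ψ f` holds for all nonneg. nonincreasing `f` iff
both `φ ∈ B` and `ψ ∈ B`. -/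
theorem statement11 (R : ℝ≥0∞) (hR : 0 < R) (φ ψ : ℝ → ℝ≥0∞)
    (hφ : QuasiConcaveOn R φ) (hψ : QuasiConcaveOn R ψ) :
    (∃ C : ℝ, 0 < C ∧ ∀ f : ℝ → ℝ≥0∞, NonincOn R f → ∀ t ∈ DomIoo R,
        (ENNReal.ofReal C)⁻¹ * (Ssup φ f t + Tsup R ψ f t) ≤
            Ssup φ (dstar f) t + Tsup R ψ (dstar f) t ∧
        Ssup φ (dstar f) t + Tsup R ψ (dstar f) t ≤
            ENNReal.ofReal C * (Ssup φ f t + Tsup R ψ f t)) ↔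
      (BCond R φ ∧ BCond R ψ) :=
  statement11_general R φ ψ hφ hψ
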